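/- Let α ∈ (0,1), T > 0, and let h : [0,T] → ℝ be C¹ with h(0) = h'(0) = 0 and [h']_{α/2;[0,T]} < ∞. Let v(t,y) = ∫₀^t P(s,y) h(t-s) ds. Then for all t ∈ [0,T] and y₁ > y₂ ≥ 0 with y₁ + y₂ > 2(y₁ - y₂), one has |∂_t v(t, y₁) - ∂_t v(t, y₂)| ≤ C [h']_{α/2;[0,T]} (y₁ - y₂)^{α}, where C depends only on α. -/

import Mathlib

open MeasureTheory Real

/-- The Poisson (boundary) kernel for the heat equation on the half-line. -/
noncomputable def heatP (s y : ℝ) : ℝ :=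
  y / (2 * Real.sqrt Real.pi * s ^ ((3:ℝ)/2)) * Real.exp (-(y^2) / (4*s))

/-- The representation of the time derivative `∂ₜ v` of the solution
`v(t,y) = ∫₀ᵗ P(s,y) h(t-s) ds`, namely
`∂ₜ v(t,y) = ∫₀^∞ P(r,1) h̃'(t - y² r) dr`, where `h̃'` is the extension of
`h'` by zero to negative times. -/
noncomputable def dtv (h' : ℝ → ℝ) (t y : ℝ) : ℝ :=
  ∫ r in Set.Ioi (0:ℝ), heatP r 1 * (if 0 ≤ t - y^2 * r then h' (t - y^2 * r) else 0)

open Set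

/-!
Substituting `u = y² r` turns `∂ₜv(t, y)` into `∫₀^∞ P(u, y) h̃'(t - u) du`, and
`∫₀^∞ P(u, y) du = 1` for every `y > 0`, so
`∂ₜv(t, y₁) - ∂ₜv(t, y₂) = ∫₀^∞ (P(u, y₁) - P(u, y₂)) (h̃'(t - u) - h'(t)) du`, where the Hölder condition and `h'(0) = 0` bound the second factor by `M u^{α/2}`.
By the mean value theorem in `y`, `u^{α/2} |P(u, y₁) - P(u, y₂)|` is at most `y₁ - y₂` times a
majorant of `u^{α/2} |∂_y P(u, η)|` over `η ∈ [y₂, y₁]`; the majorant is a combination of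
`e^{-a/u} u^{-p}`, whose integral is `Γ(p - 1) a^{1-p}`, and integrates to `O((y₂ / 2)^{α-1})` as
`y₁ ≤ 3 y₂`. Finally `y₂ > (y₁ - y₂) / 2` turns `(y₁ - y₂) (y₂ / 2)^{α-1}` into `O((y₁ - y₂)^α)`.
-/

/-- The integrand of `integral_comp_rpow_Ioi` for the exponent `-1`, i.e. after substituting
`u = x⁻¹`. -/
theorem exp_neg_div_mul_rpow_comp_inv {a p x : ℝ} (hx : 0 < x) :
    x ^ (-1 - 1 : ℝ) • (exp (-a / x ^ (-1 : ℝ)) * (x ^ (-1 : ℝ)) ^ (-p))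
      = x ^ (p - 1 - 1) * exp (-(a * x)) := by
  rw [smul_eq_mul, rpow_neg_one, div_inv_eq_mul, ← rpow_neg_one, ← rpow_mul hx.le,
    mul_left_comm, ← rpow_add hx]
  ring_nf

theorem integrableOn_exp_neg_div_mul_rpow {a p : ℝ} (ha : 0 < a) (hp : 1 < p) :
    IntegrableOn (fun u => exp (-a / u) * u ^ (-p)) (Ioi 0) := by
  rw [← integrableOn_Ioi_comp_rpow_iff' _ (by norm_num : (-1 : ℝ) ≠ 0)]
  refine (integrableOn_congr_fun (fun x (hx : x ∈ Ioi 0) => (exp_neg_div_mul_rpow_comp_inv hx).symm)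
    measurableSet_Ioi).mp ?_
  have := integrableOn_rpow_mul_exp_neg_mul_rpow (by linarith : -1 < p - 1 - 1) one_pos ha
  simpa only [rpow_one, neg_mul] using this

theorem integral_exp_neg_div_mul_rpow {a p : ℝ} (ha : 0 < a) (hp : 1 < p) :
    ∫ u in Ioi 0, exp (-a / u) * u ^ (-p) = Gamma (p - 1) * a ^ (1 - p) := by
  rw [← integral_comp_rpow_Ioi _ (by norm_num : (-1 : ℝ) ≠ 0)]
  simp only [abs_neg, abs_one, one_mul]
  rw [setIntegral_congr_fun measurableSet_Ioi (fun x hx => exp_neg_div_mul_rpow_comp_inv hx),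
    integral_rpow_mul_exp_neg_mul_Ioi (by linarith) ha, one_div, inv_rpow ha.le, ← rpow_neg ha.le]
  ring_nf

theorem heatP_eq_mul_exp_neg_div_mul_rpow {u : ℝ} (hu : 0 < u) (y : ℝ) :
    heatP u y = y / (2 * √π) * (exp (-(y / 2) ^ 2 / u) * u ^ (-(3 / 2 : ℝ))) := by
  have : 0 < √π := sqrt_pos.mpr pi_pos
  rw [heatP, rpow_neg hu.le]
  field_simp
  ring_nf

theorem integrableOn_heatP {y : ℝ} (hy : 0 < y) : IntegrableOn (heatP · y) (Ioi 0) :=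
  (integrableOn_congr_fun (fun u (hu : u ∈ Ioi 0) => (heatP_eq_mul_exp_neg_div_mul_rpow hu y).symm)
    measurableSet_Ioi).mp
    ((integrableOn_exp_neg_div_mul_rpow (by positivity) (by norm_num)).const_mul _)

theorem integral_heatP {y : ℝ} (hy : 0 < y) : ∫ u in Ioi 0, heatP u y = 1 := by
  rw [setIntegral_congr_fun measurableSet_Ioi
      (fun u (hu : u ∈ Ioi 0) => heatP_eq_mul_exp_neg_div_mul_rpow hu y),
    integral_const_mul, integral_exp_neg_div_mul_rpow (by positivity) (by norm_num),
    ← rpow_natCast_mul (by positivity)]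
  have : 0 < √π := sqrt_pos.mpr pi_pos
  norm_num [Gamma_one_half_eq, rpow_neg_one]
  field_simp

theorem heatP_sq_mul {y r : ℝ} (hy : 0 < y) (hr : 0 < r) :
    heatP (y ^ 2 * r) y = (y ^ 2)⁻¹ * heatP r 1 := by
  have hy3 : (y ^ 2) ^ (-(3 / 2 : ℝ)) = (y ^ 3)⁻¹ := by
    rw [← rpow_natCast_mul hy.le, ← rpow_natCast, ← rpow_neg hy.le]
    norm_num
  rw [heatP_eq_mul_exp_neg_div_mul_rpow (by positivity), heatP_eq_mul_exp_neg_div_mul_rpow hr,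
    mul_rpow (by positivity) hr.le, hy3]
  have : -(y / 2) ^ 2 / (y ^ 2 * r) = -(1 / 2) ^ 2 / r := by field_simp
  rw [this]
  field_simp

theorem dtv_eq_integral_heatP_mul {f : ℝ → ℝ} {t y : ℝ} (hy : 0 < y) :
    dtv f t y = ∫ u in Ioi 0, heatP u y * indicator (Ici 0) f (t - u) := by
  have hy2 : 0 < y ^ 2 := by positivity
  have hsub := integral_comp_mul_left_Ioi (fun u => heatP u y * indicator (Ici 0) f (t - u)) 0 hy2
  rw [mul_zero, smul_eq_mul] at hsub
  rw [← mul_inv_cancel_left₀ hy2.ne' (∫ u in Ioi 0, _), ← hsub, ← integral_const_mul, dtv]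
  refine setIntegral_congr_fun measurableSet_Ioi fun r (hr : 0 < r) => ?_
  simp only [heatP_sq_mul hy hr, indicator_apply, mem_Ici]
  field_simp

theorem heatP_nonneg {u y : ℝ} (hu : 0 < u) (hy : 0 ≤ y) : 0 ≤ heatP u y := by
  rw [heatP_eq_mul_exp_neg_div_mul_rpow hu]
  positivity

theorem integrableOn_heatP_mul {φ : ℝ → ℝ} {y α M : ℝ} (hy : 0 < y) (hα : α < 1)
    (hφm : AEStronglyMeasurable φ (volume.restrict (Ioi 0)))
    (hφ : ∀ u, 0 < u → |φ u| ≤ M * u ^ (α / 2)) :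
    IntegrableOn (fun u => heatP u y * φ u) (Ioi 0) := by
  have hmeas : Measurable (heatP · y) := by unfold heatP; fun_prop
  refine Integrable.mono' (((integrableOn_exp_neg_div_mul_rpow (a := (y / 2) ^ 2)
    (p := (3 - α) / 2) (by positivity) (by linarith)).const_mul (y / (2 * √π))).const_mul M)
    (hmeas.aestronglyMeasurable.mul hφm) ?_
  filter_upwards [ae_restrict_mem measurableSet_Ioi] with u (hu : 0 < u)
  have hrpow : u ^ (-(3 / 2 : ℝ)) * u ^ (α / 2) = u ^ (-((3 - α) / 2)) := by
    rw [← rpow_add hu]; ring_nf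
  calc ‖heatP u y * φ u‖ = heatP u y * |φ u| := by
        rw [norm_mul, norm_of_nonneg (heatP_nonneg hu hy.le), norm_eq_abs]
    _ ≤ heatP u y * (M * u ^ (α / 2)) := mul_le_mul_of_nonneg_left (hφ u hu) (heatP_nonneg hu hy.le)
    _ = M * (y / (2 * √π) * (exp (-(y / 2) ^ 2 / u) * u ^ (-((3 - α) / 2)))) := by
        rw [heatP_eq_mul_exp_neg_div_mul_rpow hu, ← hrpow]; ring

theorem dtv_eq_integral_heatP_mul_sub_add {f : ℝ → ℝ} {t y c : ℝ} (hy : 0 < y)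
    (hint : IntegrableOn (fun u => heatP u y * (indicator (Ici 0) f (t - u) - c)) (Ioi 0)) :
    dtv f t y = (∫ u in Ioi 0, heatP u y * (indicator (Ici 0) f (t - u) - c)) + c := by
  calc dtv f t y
      = ∫ u in Ioi 0, (heatP u y * (indicator (Ici 0) f (t - u) - c) + c * heatP u y) := by
        rw [dtv_eq_integral_heatP_mul hy]; ring_nf
    _ = _ := by
        rw [integral_add hint ((integrableOn_heatP hy).const_mul c), integral_const_mul,
          integral_heatP hy, mul_one]

theorem dtv_sub_dtv_eq_integral {f : ℝ → ℝ} {t y₁ y₂ c : ℝ} (hy₁ : 0 < y₁) (hy₂ : 0 < y₂)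
    (hint₁ : IntegrableOn (fun u => heatP u y₁ * (indicator (Ici 0) f (t - u) - c)) (Ioi 0))
    (hint₂ : IntegrableOn (fun u => heatP u y₂ * (indicator (Ici 0) f (t - u) - c)) (Ioi 0)) :
    dtv f t y₁ - dtv f t y₂
      = ∫ u in Ioi 0, (heatP u y₁ - heatP u y₂) * (indicator (Ici 0) f (t - u) - c) := by
  rw [dtv_eq_integral_heatP_mul_sub_add hy₁ hint₁, dtv_eq_integral_heatP_mul_sub_add hy₂ hint₂,
    add_sub_add_right_eq_sub, ← integral_sub hint₁ hint₂]
  simp only [sub_mul]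

theorem abs_indicator_Ici_sub_le {f : ℝ → ℝ} {T M β t u : ℝ}
    (hf : ∀ s ∈ Icc 0 T, ∀ t ∈ Icc 0 T, |f s - f t| ≤ M * |s - t| ^ β) (hf0 : f 0 = 0)
    (hM : 0 ≤ M) (hβ : 0 ≤ β) (ht : t ∈ Icc 0 T) (hu : 0 < u) :
    |indicator (Ici 0) f (t - u) - f t| ≤ M * u ^ β := by
  by_cases htu : 0 ≤ t - u
  · rw [indicator_of_mem (mem_Ici.mpr htu)]
    simpa [abs_of_pos hu] using hf (t - u) ⟨htu, by linarith [ht.2]⟩ t ht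
  · rw [indicator_of_notMem (by simpa using htu), zero_sub, abs_neg]
    have := hf t ht 0 ⟨le_rfl, ht.1.trans ht.2⟩
    rw [hf0, sub_zero, sub_zero, abs_of_nonneg ht.1] at this
    exact this.trans (mul_le_mul_of_nonneg_left
      (rpow_le_rpow ht.1 (by linarith [not_le.mp htu]) hβ) hM)

noncomputable def heatPDeriv (u y : ℝ) : ℝ :=
  (2 * √π)⁻¹ * (1 - y ^ 2 / (2 * u)) * (exp (-(y / 2) ^ 2 / u) * u ^ (-(3 / 2 : ℝ)))

theorem hasDerivAt_heatP {u : ℝ} (hu : 0 < u) (y : ℝ) :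
    HasDerivAt (heatP u) (heatPDeriv u y) y := by
  have hP : heatP u = fun y => y / (2 * √π) * (exp (-(y / 2) ^ 2 / u) * u ^ (-(3 / 2 : ℝ))) :=
    funext (heatP_eq_mul_exp_neg_div_mul_rpow hu)
  have hexp : HasDerivAt (fun y : ℝ => exp (-(y / 2) ^ 2 / u))
      (exp (-(y / 2) ^ 2 / u) * (-(2 * (y / 2) * (1 / 2)) / u)) y := by
    simpa using ((((hasDerivAt_id y).div_const 2).pow 2).neg.div_const u).exp
  rw [hP]
  refine (((hasDerivAt_id' y).div_const (2 * √π)).mul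
    (hexp.mul_const (u ^ (-(3 / 2 : ℝ))))).congr_deriv ?_
  rw [heatPDeriv]
  field_simp
  ring

noncomputable def heatPDerivMajorant (α y₁ y₂ u : ℝ) : ℝ :=
  (2 * √π)⁻¹ * (exp (-(y₂ / 2) ^ 2 / u) * u ^ (-((3 - α) / 2))
    + y₁ ^ 2 / 2 * (exp (-(y₂ / 2) ^ 2 / u) * u ^ (-((5 - α) / 2))))

theorem abs_heatPDeriv_mul_rpow_le {u y y₁ y₂ : ℝ} (α : ℝ) (hu : 0 < u) (hy₂ : 0 ≤ y₂)
    (h₂ : y₂ ≤ y) (h₁ : y ≤ y₁) :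
    |heatPDeriv u y| * u ^ (α / 2) ≤ heatPDerivMajorant α y₁ y₂ u := by
  have hfactor : |1 - y ^ 2 / (2 * u)| ≤ 1 + y₁ ^ 2 / (2 * u) := by
    have h0 : 0 ≤ y ^ 2 / (2 * u) := by positivity
    have hle : y ^ 2 / (2 * u) ≤ y₁ ^ 2 / (2 * u) := by gcongr; linarith
    exact abs_le.mpr ⟨by linarith, by linarith⟩
  have hweight : u ^ (-(3 / 2 : ℝ)) * u ^ (α / 2) = u ^ (-((3 - α) / 2)) := by
    rw [← rpow_add hu]; ring_nf
  have hshift : u ^ (-((5 - α) / 2)) = u ^ (-((3 - α) / 2)) * u⁻¹ := by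
    rw [← rpow_neg_one, ← rpow_add hu]; ring_nf
  calc |heatPDeriv u y| * u ^ (α / 2)
      = (2 * √π)⁻¹ * |1 - y ^ 2 / (2 * u)| * (exp (-(y / 2) ^ 2 / u) * u ^ (-((3 - α) / 2))) := by
        rw [heatPDeriv, abs_mul, abs_mul, abs_of_pos (by positivity : (0 : ℝ) < (2 * √π)⁻¹),
          abs_of_pos (by positivity : 0 < exp (-(y / 2) ^ 2 / u) * u ^ (-(3 / 2 : ℝ))),
          ← hweight]
        ring
    _ ≤ (2 * √π)⁻¹ * (1 + y₁ ^ 2 / (2 * u)) *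
          (exp (-(y₂ / 2) ^ 2 / u) * u ^ (-((3 - α) / 2))) := by
        gcongr
    _ = heatPDerivMajorant α y₁ y₂ u := by rw [heatPDerivMajorant, hshift]; field_simp

theorem abs_heatP_sub_heatP_mul_rpow_le {u y₁ y₂ : ℝ} (α : ℝ) (hu : 0 < u) (hy₂ : 0 ≤ y₂)
    (h : y₂ ≤ y₁) :
    |heatP u y₁ - heatP u y₂| * u ^ (α / 2) ≤ (y₁ - y₂) * heatPDerivMajorant α y₁ y₂ u := by
  have hmvt := (convex_Icc y₂ y₁).norm_image_sub_le_of_norm_hasDerivWithin_le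
    (fun y _ => ((hasDerivAt_heatP hu y).mul_const (u ^ (α / 2))).hasDerivWithinAt)
    (fun y hy => by
      rw [norm_mul, norm_eq_abs, norm_of_nonneg (by positivity)]
      exact abs_heatPDeriv_mul_rpow_le α hu hy₂ hy.1 hy.2)
    (left_mem_Icc.mpr h) (right_mem_Icc.mpr h)
  rw [← sub_mul, norm_mul, norm_eq_abs, norm_of_nonneg (by positivity), norm_eq_abs,
    abs_of_nonneg (sub_nonneg.mpr h)] at hmvt
  rwa [mul_comm (y₁ - y₂)]

theorem integrableOn_heatPDerivMajorant {α y₁ y₂ : ℝ} (hα : α < 1) (hy₂ : 0 < y₂) :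
    IntegrableOn (heatPDerivMajorant α y₁ y₂) (Ioi 0) :=
  ((integrableOn_exp_neg_div_mul_rpow (by positivity) (by linarith)).add
    ((integrableOn_exp_neg_div_mul_rpow (by positivity) (by linarith)).const_mul _)).const_mul _

noncomputable def heatPDerivMajorantConst (α : ℝ) : ℝ :=
  (2 * √π)⁻¹ * (Gamma ((1 - α) / 2) + 18 * Gamma ((3 - α) / 2))

theorem heatPDerivMajorantConst_pos {α : ℝ} (hα : α < 1) : 0 < heatPDerivMajorantConst α := by
  have := Gamma_pos_of_pos (by linarith : 0 < (1 - α) / 2)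
  have := Gamma_pos_of_pos (by linarith : 0 < (3 - α) / 2)
  unfold heatPDerivMajorantConst
  positivity

theorem integral_heatPDerivMajorant_le {α y₁ y₂ : ℝ} (hα : α < 1) (hy₂ : 0 < y₂)
    (h : y₂ ≤ y₁) (hy₁ : y₁ ≤ 3 * y₂) :
    ∫ u in Ioi 0, heatPDerivMajorant α y₁ y₂ u
      ≤ heatPDerivMajorantConst α * (y₂ / 2) ^ (α - 1) := by
  have hz : 0 < y₂ / 2 := by positivity
  have hsq : ∀ s : ℝ, ((y₂ / 2) ^ 2) ^ (s / 2) = (y₂ / 2) ^ s := fun s => by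
    rw [← rpow_natCast_mul hz.le]; congr 1; push_cast; ring
  have hy₁sq : y₁ ^ 2 / 2 ≤ 18 * (y₂ / 2) ^ 2 := by nlinarith
  have := Gamma_pos_of_pos (by linarith : 0 < (3 - α) / 2)
  unfold heatPDerivMajorant heatPDerivMajorantConst
  rw [integral_const_mul,
    integral_add (integrableOn_exp_neg_div_mul_rpow (by positivity) (by linarith))
      ((integrableOn_exp_neg_div_mul_rpow (by positivity) (by linarith)).const_mul _),
    integral_const_mul, integral_exp_neg_div_mul_rpow (by positivity) (by linarith),
    integral_exp_neg_div_mul_rpow (by positivity) (by linarith)]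
  have e1 : (3 - α) / 2 - 1 = (1 - α) / 2 := by ring
  have e2 : (5 - α) / 2 - 1 = (3 - α) / 2 := by ring
  have e3 : 1 - (3 - α) / 2 = (α - 1) / 2 := by ring
  have e4 : 1 - (5 - α) / 2 = (α - 3) / 2 := by ring
  have e5 : (y₂ / 2) ^ (α - 3) * (y₂ / 2) ^ 2 = (y₂ / 2) ^ (α - 1) := by
    rw [← rpow_natCast, ← rpow_add hz]; ring_nf
  rw [e1, e2, e3, e4, hsq, hsq, mul_assoc]
  refine mul_le_mul_of_nonneg_left ?_ (by positivity)
  calc Gamma ((1 - α) / 2) * (y₂ / 2) ^ (α - 1)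
        + y₁ ^ 2 / 2 * (Gamma ((3 - α) / 2) * (y₂ / 2) ^ (α - 3))
      ≤ Gamma ((1 - α) / 2) * (y₂ / 2) ^ (α - 1)
        + 18 * (y₂ / 2) ^ 2 * (Gamma ((3 - α) / 2) * (y₂ / 2) ^ (α - 3)) := by gcongr
    _ = _ := by rw [← e5]; ring

theorem rpow_sub_one_mul_le {c d z α : ℝ} (hc : 0 < c) (hd : 0 < d) (hdz : d ≤ c * z) (hα : α ≤ 1) :
    d * z ^ (α - 1) ≤ c ^ (1 - α) * d ^ α := by
  have hz : d / c ≤ z := by rwa [div_le_iff₀' hc]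
  calc d * z ^ (α - 1) ≤ d * (d / c) ^ (α - 1) :=
        mul_le_mul_of_nonneg_left
          (rpow_le_rpow_of_nonpos (by positivity) hz (by linarith)) hd.le
    _ = c ^ (1 - α) * d ^ α := by
        rw [div_rpow hd.le hc.le, rpow_sub_one hd.ne', show 1 - α = -(α - 1) by ring,
          rpow_neg hc.le]
        field_simp

theorem abs_integral_heatP_sub_mul_le {φ : ℝ → ℝ} {α M y₁ y₂ : ℝ} (hα : α < 1)
    (hφ : ∀ u, 0 < u → |φ u| ≤ M * u ^ (α / 2)) (hy₂ : 0 < y₂) (h : y₂ < y₁)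
    (hy₁ : y₁ ≤ 3 * y₂) :
    |∫ u in Ioi 0, (heatP u y₁ - heatP u y₂) * φ u|
      ≤ heatPDerivMajorantConst α * 4 ^ (1 - α) * M * (y₁ - y₂) ^ α := by
  have hM : 0 ≤ M := by simpa using (abs_nonneg _).trans (hφ 1 one_pos)
  have hd : (y₁ - y₂) * (y₂ / 2) ^ (α - 1) ≤ 4 ^ (1 - α) * (y₁ - y₂) ^ α :=
    rpow_sub_one_mul_le (by norm_num) (by linarith) (by linarith) hα.le
  have hpt : ∀ u ∈ Ioi 0, ‖(heatP u y₁ - heatP u y₂) * φ u‖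
      ≤ M * (y₁ - y₂) * heatPDerivMajorant α y₁ y₂ u := fun u (hu : 0 < u) =>
    calc ‖(heatP u y₁ - heatP u y₂) * φ u‖ ≤ |heatP u y₁ - heatP u y₂| * (M * u ^ (α / 2)) := by
          rw [norm_mul, norm_eq_abs, norm_eq_abs]; gcongr; exact hφ u hu
      _ = M * (|heatP u y₁ - heatP u y₂| * u ^ (α / 2)) := by ring
      _ ≤ M * ((y₁ - y₂) * heatPDerivMajorant α y₁ y₂ u) :=
          mul_le_mul_of_nonneg_left (abs_heatP_sub_heatP_mul_rpow_le α hu hy₂.le h.le) hM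
      _ = _ := by ring
  calc |∫ u in Ioi 0, (heatP u y₁ - heatP u y₂) * φ u|
      ≤ ∫ u in Ioi 0, M * (y₁ - y₂) * heatPDerivMajorant α y₁ y₂ u :=
        norm_integral_le_of_norm_le ((integrableOn_heatPDerivMajorant hα hy₂).const_mul _)
          (ae_restrict_of_forall_mem measurableSet_Ioi hpt)
    _ ≤ M * (y₁ - y₂) * (heatPDerivMajorantConst α * (y₂ / 2) ^ (α - 1)) := by
        rw [integral_const_mul]
        gcongr
        exact integral_heatPDerivMajorant_le hα hy₂ h.le hy₁
    _ = M * heatPDerivMajorantConst α * ((y₁ - y₂) * (y₂ / 2) ^ (α - 1)) := by ring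
    _ ≤ M * heatPDerivMajorantConst α * (4 ^ (1 - α) * (y₁ - y₂) ^ α) :=
        mul_le_mul_of_nonneg_left hd (mul_nonneg hM (heatPDerivMajorantConst_pos hα).le)
    _ = heatPDerivMajorantConst α * 4 ^ (1 - α) * M * (y₁ - y₂) ^ α := by ring

theorem space_holder_estimate_case2 (α : ℝ) (hα : α ∈ Set.Ioo (0:ℝ) 1) :
    ∃ C : ℝ, 0 < C ∧
      ∀ (T : ℝ), 0 < T →
      ∀ (h h' : ℝ → ℝ), (∀ t, HasDerivAt h (h' t) t) →
        ∀ M : ℝ, 0 ≤ M →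
        (∀ s ∈ Set.Icc (0:ℝ) T, ∀ t ∈ Set.Icc (0:ℝ) T,
          |h' s - h' t| ≤ M * |s - t| ^ (α/2)) →
        h 0 = 0 → h' 0 = 0 →
        ∀ t ∈ Set.Icc (0:ℝ) T, ∀ y₁ y₂ : ℝ, 0 ≤ y₂ → y₂ < y₁ →
          2 * (y₁ - y₂) < y₁ + y₂ →
          |dtv h' t y₁ - dtv h' t y₂| ≤ C * M * (y₁ - y₂) ^ α := by
  refine ⟨heatPDerivMajorantConst α * 4 ^ (1 - α),
    mul_pos (heatPDerivMajorantConst_pos hα.2) (by positivity), ?_⟩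
  intro T _ h h' hh' M hM hHol _ h'0 t ht y₁ y₂ hy₂ hy₂₁ hclose
  have hy₂pos : 0 < y₂ := by linarith
  have hy₁pos : 0 < y₁ := by linarith
  have hφ (u : ℝ) (hu : 0 < u) : |indicator (Ici 0) h' (t - u) - h' t| ≤ M * u ^ (α / 2) :=
    abs_indicator_Ici_sub_le hHol h'0 hM (by linarith [hα.1]) ht hu
  have hφm : Measurable fun u => indicator (Ici 0) h' (t - u) - h' t := by
    have : Measurable h' := funext (fun x => (hh' x).deriv) ▸ measurable_deriv h
    fun_prop (disch := exact measurableSet_Ici)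
  have hint (y : ℝ) (hy : 0 < y) :=
    integrableOn_heatP_mul (y := y) hy hα.2 hφm.aestronglyMeasurable hφ
  rw [dtv_sub_dtv_eq_integral hy₁pos hy₂pos (hint y₁ hy₁pos) (hint y₂ hy₂pos)]
  exact abs_integral_heatP_sub_mul_le hα.2 hφ hy₂pos hy₂₁ (by linarith)
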